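/- The compression capacity of the model (11;C1,C2;f) equals (C1 + C2) / log 3. That is, the supremum, over all positive integers k and all admissible k-shot codes (φ1, φ2), of the rate k / max(⌈log|Im φ1| / C1⌉, ⌈log|Im φ2| / C2⌉) equals (C1 + C2) / log 3. -/

import Mathlib

/-!
Statement 4: The compression capacity of the model (11;C1,C2;f), where both encoders observe
both sources and the target function is the binary arithmetic sum f(x,y) = x + y, equals
(C1 + C2) / log 3 (logarithm base 2). Encoders are maps with finite image; WLOG into ℕ.
-/

/-- The componentwise integer sum of two binary vectors. -/
def vsum {k : ℕ} (x y : Fin k → Fin 2) : Fin k → ℕ := fun i => (x i : ℕ) + (y i : ℕ)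

/-- The cardinality of the image of an encoding map defined on `A^k × A^k`. -/
def imCard {k : ℕ} (φ : (Fin k → Fin 2) × (Fin k → Fin 2) → ℕ) : ℕ :=
  (Finset.univ.image φ).card

/-- Admissibility for the model (11;C1,C2;f): there is a decoder that recovers `x + y`
with zero error from the encoder outputs `φ1 (x, y)` and `φ2 (x, y)`. -/
def Admissible11 {k : ℕ} (φ1 φ2 : (Fin k → Fin 2) × (Fin k → Fin 2) → ℕ) : Prop :=
  ∃ ψ : ℕ → ℕ → (Fin k → ℕ), ∀ x y : Fin k → Fin 2, ψ (φ1 (x, y)) (φ2 (x, y)) = vsum x y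

/-- The rate of a k-shot code: `k / max(⌈log|Im φ1| / C1⌉, ⌈log|Im φ2| / C2⌉)`,
logarithms in base 2. -/
noncomputable def rate11 (C1 C2 : ℝ) {k : ℕ}
    (φ1 φ2 : (Fin k → Fin 2) × (Fin k → Fin 2) → ℕ) : ℝ :=
  (k : ℝ) /
    ((max ⌈Real.logb 2 (imCard φ1) / C1⌉ ⌈Real.logb 2 (imCard φ2) / C2⌉ : ℤ) : ℝ)

/-!
Converse: an admissible code recovers `x + y`, which takes `3 ^ k` values, from the pair of
codewords, so `3 ^ k ≤ |Im φ1| |Im φ2|`; taking logarithms,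
`k log 3 ≤ ⌈log |Im φ1| / C1⌉ C1 + ⌈log |Im φ2| / C2⌉ C2 ≤ M (C1 + C2)` for the denominator `M`
of the rate.

Achievability: for `m ∈ ℕ` put `Ni = 2 ^ ⌊m Ci⌋₊` and take `k` maximal with `3 ^ k ≤ N1 N2`.
Enumerating the sum vectors, the index `i < N1 N2` is sent as `(i % N1, i / N1)`. Both ceilings
are then at most `m`, and `k / m ≥ (C1 + C2) / log 3 - O(1 / m)`.
-/

open Finset

lemma card_image_le_card_image_mul_card_image {α β γ δ : Type*} [Fintype α] [DecidableEq β]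
    [DecidableEq γ] [DecidableEq δ] (f : α → β) (g : α → γ) (ψ : β → γ → δ) :
    (univ.image fun a => ψ (f a) (g a)).card ≤ (univ.image f).card * (univ.image g).card := by
  refine (card_le_card ?_).trans (card_image₂_le ψ _ _)
  intro d hd
  obtain ⟨a, -, rfl⟩ := mem_image.1 hd
  exact mem_image₂_of_mem (mem_image_of_mem f (mem_univ a)) (mem_image_of_mem g (mem_univ a))

lemma exists_factorsThrough_of_card_image_le {α γ : Type*} [Fintype α] [DecidableEq γ]
    (F : α → γ) {N1 N2 : ℕ} (h : (univ.image F).card ≤ N1 * N2) :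
    ∃ φ1 φ2 : α → ℕ, (∀ a, φ1 a < N1) ∧ (∀ a, φ2 a < N2) ∧
      F.FactorsThrough fun a => (φ1 a, φ2 a) := by
  let idx : α → ℕ := fun a => (univ.image F).equivFin ⟨F a, mem_image_of_mem F (mem_univ a)⟩
  have idx_lt (a : α) : idx a < N1 * N2 := (Fin.is_lt _).trans_le h
  refine ⟨fun a => idx a % N1, fun a => idx a / N1, fun a => Nat.mod_lt _ ?_,
    fun a => Nat.div_lt_of_lt_mul (idx_lt a), fun a b hab => ?_⟩
  · exact Nat.pos_of_ne_zero fun h0 => by simpa [h0] using idx_lt a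
  · simp only [Prod.mk.injEq] at hab
    have : idx a = idx b := by rw [← Nat.div_add_mod (idx a) N1, hab.1, hab.2, Nat.div_add_mod]
    simpa using (univ.image F).equivFin.injective (Fin.ext this)

section Code

variable {k : ℕ} {φ φ1 φ2 : (Fin k → Fin 2) × (Fin k → Fin 2) → ℕ}

lemma image_vsum_eq_piFinset :
    (univ.image fun p : (Fin k → Fin 2) × (Fin k → Fin 2) => vsum p.1 p.2) =
      Fintype.piFinset fun _ => range 3 := by
  ext z
  simp only [mem_image, mem_univ, true_and, Fintype.mem_piFinset, mem_range]
  constructor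
  · rintro ⟨p, rfl⟩ i
    have := (p.1 i).is_lt
    have := (p.2 i).is_lt
    simp only [vsum]
    omega
  · intro hz
    refine ⟨(fun i => ⟨min (z i) 1, by omega⟩, fun i => ⟨z i - min (z i) 1, by
      have := hz i; omega⟩), funext fun i => ?_⟩
    simp only [vsum]
    omega

lemma card_image_vsum :
    (univ.image fun p : (Fin k → Fin 2) × (Fin k → Fin 2) => vsum p.1 p.2).card = 3 ^ k := by
  simp [image_vsum_eq_piFinset, Fintype.card_piFinset]

lemma imCard_pos (φ : (Fin k → Fin 2) × (Fin k → Fin 2) → ℕ) : 0 < imCard φ :=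
  card_pos.2 (univ_nonempty.image φ)

lemma imCard_le_of_forall_lt {N : ℕ} (h : ∀ p, φ p < N) : imCard φ ≤ N :=
  (card_le_card (image_subset_iff.2 fun p _ => mem_range.2 (h p))).trans (card_range N).le

lemma admissible11_of_factorsThrough
    (h : (fun p : (Fin k → Fin 2) × (Fin k → Fin 2) => vsum p.1 p.2).FactorsThrough
      fun p => (φ1 p, φ2 p)) : Admissible11 φ1 φ2 :=
  ⟨fun i j => Function.extend (fun p => (φ1 p, φ2 p)) (fun p => vsum p.1 p.2) 0 (i, j),
    fun x y => h.extend_apply 0 (x, y)⟩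

lemma Admissible11.pow_three_le_imCard_mul (h : Admissible11 φ1 φ2) :
    3 ^ k ≤ imCard φ1 * imCard φ2 := by
  obtain ⟨ψ, hψ⟩ := h
  have hF : (fun p : (Fin k → Fin 2) × (Fin k → Fin 2) => ψ (φ1 p) (φ2 p)) =
      fun p => vsum p.1 p.2 := funext fun p => hψ p.1 p.2
  rw [← card_image_vsum, ← hF]
  exact card_image_le_card_image_mul_card_image φ1 φ2 ψ

lemma exists_admissible11_imCard_le {N1 N2 : ℕ} (h : 3 ^ k ≤ N1 * N2) :
    ∃ φ1 φ2 : (Fin k → Fin 2) × (Fin k → Fin 2) → ℕ,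
      Admissible11 φ1 φ2 ∧ imCard φ1 ≤ N1 ∧ imCard φ2 ≤ N2 := by
  obtain ⟨φ1, φ2, h1, h2, hF⟩ :=
    exists_factorsThrough_of_card_image_le (fun p : (Fin k → Fin 2) × (Fin k → Fin 2) =>
      vsum p.1 p.2) (card_image_vsum.trans_le h)
  exact ⟨φ1, φ2, admissible11_of_factorsThrough hF, imCard_le_of_forall_lt h1,
    imCard_le_of_forall_lt h2⟩

lemma Admissible11.mul_logb_three_le (h : Admissible11 φ1 φ2) :
    k * Real.logb 2 3 ≤ Real.logb 2 (imCard φ1) + Real.logb 2 (imCard φ2) := by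
  have hcount : ((3 : ℕ) ^ k : ℝ) ≤ ((imCard φ1 * imCard φ2 : ℕ) : ℝ) := by
    exact_mod_cast h.pow_three_le_imCard_mul
  push_cast at hcount
  have hpos (φ : (Fin k → Fin 2) × (Fin k → Fin 2) → ℕ) : (0 : ℝ) < imCard φ := by
    exact_mod_cast imCard_pos φ
  rw [← Real.logb_pow, ← Real.logb_mul (hpos φ1).ne' (hpos φ2).ne']
  exact Real.logb_le_logb_of_le one_lt_two (by positivity) hcount

lemma ceil_logb_imCard_div_le {C : ℝ} (hC : 0 < C) {n m : ℕ} (hφ : imCard φ ≤ 2 ^ n)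
    (hn : (n : ℝ) ≤ m * C) : ⌈Real.logb 2 (imCard φ) / C⌉ ≤ m := by
  have hlog : Real.logb 2 (imCard φ) ≤ n := by
    calc Real.logb 2 (imCard φ) ≤ Real.logb 2 ((2 : ℝ) ^ n) :=
          Real.logb_le_logb_of_le one_lt_two (by exact_mod_cast imCard_pos φ)
            (by exact_mod_cast hφ)
      _ = n := by rw [Real.logb_pow, Real.logb_self_eq_one one_lt_two, mul_one]
  rw [Int.ceil_le, div_le_iff₀ hC]
  push_cast
  linarith

end Code

section Rate

variable {C1 C2 u v : ℝ}

lemma add_le_max_ceil_div_mul (hC1 : 0 < C1) (hC2 : 0 < C2) :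
    u + v ≤ (max ⌈u / C1⌉ ⌈v / C2⌉ : ℤ) * (C1 + C2) := by
  have hu : u ≤ ⌈u / C1⌉ * C1 := (div_le_iff₀ hC1).1 (Int.le_ceil _)
  have hv : v ≤ ⌈v / C2⌉ * C2 := (div_le_iff₀ hC2).1 (Int.le_ceil _)
  have hu' : (⌈u / C1⌉ : ℝ) ≤ (max ⌈u / C1⌉ ⌈v / C2⌉ : ℤ) := by exact_mod_cast le_max_left _ _
  have hv' : (⌈v / C2⌉ : ℝ) ≤ (max ⌈u / C1⌉ ⌈v / C2⌉ : ℤ) := by exact_mod_cast le_max_right _ _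
  nlinarith

lemma max_ceil_div_pos (hC1 : 0 < C1) (hC2 : 0 < C2) (h : 0 < u + v) :
    0 < max ⌈u / C1⌉ ⌈v / C2⌉ := by
  rcases lt_or_ge 0 u with hu | hu
  · exact lt_max_of_lt_left (Int.ceil_pos.2 (div_pos hu hC1))
  · exact lt_max_of_lt_right (Int.ceil_pos.2 (div_pos (by linarith) hC2))

variable {k : ℕ} {φ1 φ2 : (Fin k → Fin 2) × (Fin k → Fin 2) → ℕ}

lemma Admissible11.rate11_le (hC1 : 0 < C1) (hC2 : 0 < C2) (h : Admissible11 φ1 φ2) :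
    rate11 C1 C2 φ1 φ2 ≤ (C1 + C2) / Real.logb 2 3 := by
  have hL : 0 < Real.logb 2 3 := Real.logb_pos one_lt_two (by norm_num)
  have hT : 0 ≤ (C1 + C2) / Real.logb 2 3 := by positivity
  unfold rate11
  set M := max ⌈Real.logb 2 (imCard φ1) / C1⌉ ⌈Real.logb 2 (imCard φ2) / C2⌉
  rcases le_or_gt M 0 with hM | hM
  · exact (div_nonpos_of_nonneg_of_nonpos k.cast_nonneg (by exact_mod_cast hM)).trans hT
  · rw [div_le_div_iff₀ (by exact_mod_cast hM) hL]
    linarith [h.mul_logb_three_le, add_le_max_ceil_div_mul (u := Real.logb 2 (imCard φ1))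
      (v := Real.logb 2 (imCard φ2)) hC1 hC2]

lemma Admissible11.div_le_rate11 (hC1 : 0 < C1) (hC2 : 0 < C2) (hk : 0 < k)
    (h : Admissible11 φ1 φ2) {m : ℕ} (h1 : ⌈Real.logb 2 (imCard φ1) / C1⌉ ≤ m)
    (h2 : ⌈Real.logb 2 (imCard φ2) / C2⌉ ≤ m) : (k : ℝ) / m ≤ rate11 C1 C2 φ1 φ2 := by
  have hL : 0 < Real.logb 2 3 := Real.logb_pos one_lt_two (by norm_num)
  have hM := max_ceil_div_pos hC1 hC2
    ((mul_pos (by exact_mod_cast hk) hL).trans_le h.mul_logb_three_le)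
  exact div_le_div_of_nonneg_left k.cast_nonneg (by exact_mod_cast hM)
    (by exact_mod_cast max_le h1 h2)

end Rate

lemma exists_admissible11_ceil_le {C1 C2 : ℝ} (hC1 : 0 < C1) (hC2 : 0 < C2) (m : ℕ) :
    ∃ k : ℕ, ∃ φ1 φ2 : (Fin k → Fin 2) × (Fin k → Fin 2) → ℕ, Admissible11 φ1 φ2 ∧
      ⌈Real.logb 2 (imCard φ1) / C1⌉ ≤ m ∧ ⌈Real.logb 2 (imCard φ2) / C2⌉ ≤ m ∧
      m * (C1 + C2) - 2 < (k + 1) * Real.logb 2 3 := by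
  set n1 := ⌊m * C1⌋₊
  set n2 := ⌊m * C2⌋₊
  set k := Nat.log 3 (2 ^ (n1 + n2))
  have hk : 3 ^ k ≤ 2 ^ n1 * 2 ^ n2 := by
    rw [← pow_add]; exact Nat.pow_log_le_self 3 (by positivity)
  obtain ⟨φ1, φ2, hadm, h1, h2⟩ := exists_admissible11_imCard_le hk
  refine ⟨k, φ1, φ2, hadm, ceil_logb_imCard_div_le hC1 h1 (Nat.floor_le (by positivity)),
    ceil_logb_imCard_div_le hC2 h2 (Nat.floor_le (by positivity)), ?_⟩
  have hlt : ((2 : ℕ) ^ (n1 + n2) : ℝ) < ((3 : ℕ) ^ (k + 1) : ℕ) := by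
    exact_mod_cast Nat.lt_pow_succ_log_self (by norm_num) _
  have hlog := Real.logb_lt_logb one_lt_two (by positivity) hlt
  push_cast at hlog
  rw [Real.logb_pow, Real.logb_pow, Real.logb_self_eq_one one_lt_two, mul_one] at hlog
  push_cast at hlog
  linarith [Nat.lt_floor_add_one (m * C1), Nat.lt_floor_add_one (m * C2)]

lemma exists_admissible11_lt_rate11 {C1 C2 : ℝ} (hC1 : 0 < C1) (hC2 : 0 < C2) {w : ℝ}
    (hw : w < (C1 + C2) / Real.logb 2 3) :
    ∃ k : ℕ, 0 < k ∧ ∃ φ1 φ2 : (Fin k → Fin 2) × (Fin k → Fin 2) → ℕ,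
      Admissible11 φ1 φ2 ∧ w < rate11 C1 C2 φ1 φ2 := by
  have hL : 0 < Real.logb 2 3 := Real.logb_pos one_lt_two (by norm_num)
  set c := 2 / Real.logb 2 3 + 1
  -- Beating `max w 0` rather than `w` also forces the block length `k` to be positive.
  have hgap : 0 < (C1 + C2) / Real.logb 2 3 - max w 0 :=
    sub_pos.2 (max_lt hw (by positivity))
  obtain ⟨m, hm⟩ := exists_nat_gt (c / ((C1 + C2) / Real.logb 2 3 - max w 0))
  have hm0 : (0 : ℝ) < m := (div_pos (by positivity) hgap).trans hm
  obtain ⟨k, φ1, φ2, hadm, h1, h2, hkm⟩ := exists_admissible11_ceil_le hC1 hC2 m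
  have hkT : m * ((C1 + C2) / Real.logb 2 3) - c < k := by
    have hdiv : (m * (C1 + C2) - 2) / Real.logb 2 3 < k + 1 := (div_lt_iff₀ hL).2 hkm
    have : m * ((C1 + C2) / Real.logb 2 3) - c = (m * (C1 + C2) - 2) / Real.logb 2 3 - 1 := by
      simp only [c]; field_simp; ring
    linarith
  have hwk : max w 0 < k / m := by
    rw [lt_div_iff₀ hm0]
    rw [div_lt_iff₀ hgap] at hm
    linarith
  have hk : 0 < k := by
    have := (le_max_right w 0).trans_lt hwk
    exact_mod_cast (div_pos_iff_of_pos_right hm0).1 this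
  exact ⟨k, hk, φ1, φ2, hadm,
    ((le_max_left w 0).trans_lt hwk).trans_le (hadm.div_le_rate11 hC1 hC2 hk h1 h2)⟩

theorem capacity_11 (C1 C2 : ℝ) (hC : C2 ≤ C1) (hC2 : 0 < C2) :
    sSup {r : ℝ | ∃ (k : ℕ), 0 < k ∧ ∃ φ1 φ2 : (Fin k → Fin 2) × (Fin k → Fin 2) → ℕ,
      Admissible11 φ1 φ2 ∧ r = rate11 C1 C2 φ1 φ2} = (C1 + C2) / Real.logb 2 3 := by
  have hC1 : 0 < C1 := hC2.trans_le hC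
  refine csSup_eq_of_forall_le_of_forall_lt_exists_gt ?_ ?_ ?_
  · obtain ⟨k, hk, φ1, φ2, hadm, -⟩ := exists_admissible11_lt_rate11 hC1 hC2 (sub_one_lt _)
    exact ⟨_, k, hk, φ1, φ2, hadm, rfl⟩
  · rintro r ⟨k, -, φ1, φ2, hadm, rfl⟩
    exact hadm.rate11_le hC1 hC2
  · intro w hw
    obtain ⟨k, hk, φ1, φ2, hadm, hr⟩ := exists_admissible11_lt_rate11 hC1 hC2 hw
    exact ⟨_, ⟨k, hk, φ1, φ2, hadm, rfl⟩, hr⟩
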